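/- arXiv:1005.2692 — 2 statements merged into one kernel-verified Lean document; each statement's English description precedes it below -/
import Mathlib

section
/- Let k ≥ 1, let a_1, …, a_k be pairwise relatively prime positive integers, and let t ≥ 1 be an integer. Then every representation (x_1, …, x_k) of (k+t-1)·Π − Σ in terms of (A_1, …, A_k) satisfies x_j ≡ −1 (mod a_j) for every j; more precisely, there exist nonnegative integers n_1, …, n_k with n_1 + ⋯ + n_k = t − 1 such that x_j = (n_j + 1)·a_j − 1 for every j. -/
/-- The number of representations of an integer `x` as a nonnegative integral
linear combination `∑ i, m i * A i` of `A 0, …, A (k-1)`.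
(Negative integers have zero representations.) -/
noncomputable def numRep {k : ℕ} (A : Fin k → ℕ) (x : ℤ) : ℕ :=
  {m : Fin k → ℕ | (∑ i, (m i : ℤ) * (A i : ℤ)) = x}.ncard

/-!
Put `y i = x i + 1`, so that `∑ y i * A i = (k + t - 1) * Π`. Every `A i` with `i ≠ j` is a
multiple of `a j`, while `A j` is coprime to `a j`; reducing modulo `a j` therefore gives
`a j ∣ y j`. Writing `y j = m j * a j` turns the equation into `(∑ m j) * Π = (k + t - 1) * Π`,
so `∑ m j = k + t - 1`, and `m j ≥ 1` because `y j ≥ 1`; take `n j = m j - 1`.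
-/

open Finset Function

section CofactorSum

variable {ι : Type*} [Fintype ι] [DecidableEq ι] {a : ι → ℕ}

theorem prod_div_eq_prod_erase (ha : ∀ i, 0 < a i) (i : ι) :
    (∏ j, a j) / a i = ∏ j ∈ univ.erase i, a j := by
  rw [← prod_erase_mul _ _ (mem_univ i), Nat.mul_div_cancel _ (ha i)]

theorem coprime_prod_div (ha : ∀ i, 0 < a i) (hcop : Pairwise (Nat.Coprime on a)) (j : ι) :
    Nat.Coprime (a j) ((∏ i, a i) / a j) := by
  rw [prod_div_eq_prod_erase ha]
  exact Nat.Coprime.prod_right fun i hi => hcop (ne_of_mem_erase hi).symm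

theorem dvd_prod_div_of_ne (ha : ∀ i, 0 < a i) {i j : ι} (hij : i ≠ j) :
    a j ∣ (∏ l, a l) / a i := by
  rw [prod_div_eq_prod_erase ha]
  exact dvd_prod_of_mem a (mem_erase.mpr ⟨hij.symm, mem_univ j⟩)

theorem dvd_of_sum_mul_prod_div_eq (ha : ∀ i, 0 < a i) (hcop : Pairwise (Nat.Coprime on a))
    {y : ι → ℤ} {c : ℤ}
    (h : ∑ i, y i * ((∏ l, a l) / a i : ℕ) = c * (∏ l, a l : ℕ)) (j : ι) :
    (a j : ℤ) ∣ y j := by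
  have hrest : (a j : ℤ) ∣ ∑ i ∈ univ.erase j, y i * ((∏ l, a l) / a i : ℕ) :=
    dvd_sum fun i hi => (Int.natCast_dvd_natCast.mpr
      (dvd_prod_div_of_ne ha (ne_of_mem_erase hi))).mul_left _
  have hj : (a j : ℤ) ∣ y j * ((∏ l, a l) / a j : ℕ) := by
    rw [← dvd_add_left hrest,
      add_sum_erase univ (fun i => y i * ((∏ l, a l) / a i : ℕ)) (mem_univ j), h]
    exact (Int.natCast_dvd_natCast.mpr (dvd_prod_of_mem a (mem_univ j))).mul_left _
  exact (Nat.isCoprime_iff_coprime.mpr (coprime_prod_div ha hcop j)).dvd_of_dvd_mul_right hj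

theorem exists_eq_mul_of_sum_mul_prod_div_eq (ha : ∀ i, 0 < a i)
    (hcop : Pairwise (Nat.Coprime on a)) {y : ι → ℤ} {c : ℤ}
    (h : ∑ i, y i * ((∏ l, a l) / a i : ℕ) = c * (∏ l, a l : ℕ)) :
    ∃ m : ι → ℤ, (∀ i, y i = m i * a i) ∧ ∑ i, m i = c := by
  choose m hm using fun j => dvd_of_sum_mul_prod_div_eq ha hcop h j
  refine ⟨m, fun i => (hm i).trans (mul_comm _ _), ?_⟩
  have hcancel : ∀ i, (a i : ℤ) * ((∏ l, a l) / a i : ℕ) = (∏ l, a l : ℕ) := fun i => by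
    rw [← Nat.cast_mul, Nat.mul_div_cancel' (dvd_prod_of_mem a (mem_univ i))]
  refine mul_right_cancel₀ (Nat.cast_ne_zero.mpr (prod_pos fun i (_ : i ∈ univ) => ha i).ne') ?_
  rw [← h, sum_mul]
  refine sum_congr rfl fun i _ => ?_
  rw [hm i, mul_comm (a i : ℤ), mul_assoc, hcancel]

end CofactorSum

theorem stmt4_general (k t : ℕ)
    (a : Fin k → ℕ) (ha : ∀ i, 0 < a i)
    (hcop : ∀ i j, i ≠ j → Nat.Coprime (a i) (a j)) :
    ∀ x : Fin k → ℕ,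
      (∑ i, (x i : ℤ) * (((∏ j, a j) / a i : ℕ) : ℤ))
          = ((k : ℤ) + (t : ℤ) - 1) * ((∏ j, a j : ℕ) : ℤ)
            - ((∑ i, (∏ j, a j) / a i : ℕ) : ℤ) →
      (∀ j, (x j : ℤ) ≡ -1 [ZMOD (a j : ℤ)]) ∧
      ∃ n : Fin k → ℕ, (∑ j, n j) = t - 1 ∧ ∀ j, x j = (n j + 1) * a j - 1 := by
  intro x hx
  have hshift : ∑ i, ((x i : ℤ) + 1) * ((∏ j, a j) / a i : ℕ)
      = ((k : ℤ) + t - 1) * (∏ j, a j : ℕ) := by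
    simp only [add_mul, one_mul, sum_add_distrib, hx, Nat.cast_sum]
    ring
  obtain ⟨m, hm, hmsum⟩ := exists_eq_mul_of_sum_mul_prod_div_eq ha (fun i j => hcop i j) hshift
  have hmpos : ∀ i, 1 ≤ m i := fun i => by
    by_contra! hi
    nlinarith [hm i, ha i]
  have hnsum : ∑ i, (m i - 1) = (t : ℤ) - 1 := by
    simp only [sum_sub_distrib, hmsum, sum_const, card_univ, Fintype.card_fin, nsmul_eq_mul]
    ring
  refine ⟨fun j => Int.modEq_iff_dvd.mpr ⟨-m j, by linarith [hm j]⟩,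
    fun i => (m i - 1).toNat, ?_, fun j => ?_⟩
  · have hn : ((∑ i, (m i - 1).toNat : ℕ) : ℤ) = (t : ℤ) - 1 := by
      push_cast
      rw [← hnsum]
      exact sum_congr rfl fun i _ => Int.toNat_of_nonneg (by linarith [hmpos i])
    change ∑ i, (m i - 1).toNat = t - 1
    omega
  · have hxj : x j + 1 = ((m j - 1).toNat + 1) * a j := by
      zify
      rw [hm j, Int.toNat_of_nonneg (by linarith [hmpos j])]
      ring
    change x j = ((m j - 1).toNat + 1) * a j - 1
    omega

/-- Every representation `x` of `(k+t-1)·Π − Σ` in terms of `(A₁, …, A_k)`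
satisfies `x j ≡ -1 (mod a j)` for all `j`; more precisely `x j = (n j + 1)·a j − 1`
for some nonnegative `n` summing to `t − 1`. -/
theorem stmt4 (k t : ℕ) (hk : 1 ≤ k) (ht : 1 ≤ t)
    (a : Fin k → ℕ) (ha : ∀ i, 0 < a i)
    (hcop : ∀ i j, i ≠ j → Nat.Coprime (a i) (a j)) :
    ∀ x : Fin k → ℕ,
      (∑ i, (x i : ℤ) * (((∏ j, a j) / a i : ℕ) : ℤ))
          = ((k : ℤ) + (t : ℤ) - 1) * ((∏ j, a j : ℕ) : ℤ)
            - ((∑ i, (∏ j, a j) / a i : ℕ) : ℤ) →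
      (∀ j, (x j : ℤ) ≡ -1 [ZMOD (a j : ℤ)]) ∧
      ∃ n : Fin k → ℕ, (∑ j, n j) = t - 1 ∧ ∀ j, x j = (n j + 1) * a j - 1 :=
  stmt4_general k t a ha hcop
end

section
/- Let k ≥ 1 and let a_1, …, a_k be pairwise relatively prime positive integers. Then (k−1)·Π − Σ is the greatest integer (in ℤ, where negative integers have zero representations) having no representation in terms of (A_1, …, A_k); that is, g_0(A_1, …, A_k) = (k−1)·Π − Σ. -/
open Finset Function

theorem finite_setOf_sum_mul_eq {ι : Type*} [Fintype ι] {A : ι → ℕ} (hA : ∀ i, 0 < A i)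
    (x : ℤ) : {m : ι → ℕ | ∑ i, (m i : ℤ) * A i = x}.Finite := by
  refine (Set.Finite.pi fun _ => Set.finite_Iic x.toNat).subset fun m hm i _ => ?_
  have hle : (m i : ℤ) * A i ≤ x :=
    hm ▸ single_le_sum (f := fun j => (m j : ℤ) * A j) (fun _ _ => by positivity) (mem_univ i)
  have : (m i : ℤ) ≤ m i * A i := le_mul_of_one_le_right (by positivity) (by exact_mod_cast hA i)
  simp only [Set.mem_Iic]
  omega

theorem numRep_eq_zero_iff {k : ℕ} {A : Fin k → ℕ} (hA : ∀ i, 0 < A i) (x : ℤ) :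
    numRep A x = 0 ↔ x ∉ AddSubmonoid.closure (Set.range fun i => (A i : ℤ)) := by
  rw [numRep, Set.ncard_eq_zero (finite_setOf_sum_mul_eq hA x),
    AddSubmonoid.mem_closure_range_iff_of_fintype, Set.eq_empty_iff_forall_notMem]
  simp [eq_comm]

section Cofactor

variable {ι : Type*} [Fintype ι] [DecidableEq ι] {a : ι → ℕ} {i j : ι}

def cofactor (a : ι → ℕ) (i : ι) : ℕ := ∏ j ∈ univ.erase i, a j

theorem mul_cofactor (a : ι → ℕ) (i : ι) : a i * cofactor a i = ∏ j, a j :=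
  mul_prod_erase _ _ (mem_univ i)

theorem cofactor_eq_div (hi : a i ≠ 0) : cofactor a i = (∏ j, a j) / a i := by
  rw [← mul_cofactor, Nat.mul_div_cancel_left _ (Nat.pos_of_ne_zero hi)]

theorem cofactor_pos (ha : ∀ i, 0 < a i) (i : ι) : 0 < cofactor a i :=
  prod_pos fun j _ => ha j

theorem dvd_cofactor (hij : i ≠ j) : a i ∣ cofactor a j :=
  dvd_prod_of_mem a (mem_erase.mpr ⟨hij, mem_univ i⟩)

theorem coprime_cofactor (hcop : Pairwise (Nat.Coprime on a)) (i : ι) :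
    Nat.Coprime (a i) (cofactor a i) :=
  Nat.Coprime.prod_right fun _ hj => hcop (mem_erase.mp hj).1.symm

theorem sum_sub_one_mul_cofactor (a : ι → ℕ) :
    ∑ i, ((a i : ℤ) - 1) * cofactor a i - ∏ i, (a i : ℤ)
      = ((Fintype.card ι : ℤ) - 1) * ∏ i, (a i : ℤ) - ∑ i, (cofactor a i : ℤ) := by
  have hP : ∀ i, (a i : ℤ) * cofactor a i = ∏ j, (a j : ℤ) := fun i => by
    exact_mod_cast mul_cofactor a i
  simp only [sub_mul, one_mul, sum_sub_distrib, hP, sum_const, card_univ, nsmul_eq_mul]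
  ring

theorem intCast_sum_mul_cofactor (m : ι → ℤ) (i : ι) :
    ((∑ j, m j * cofactor a j : ℤ) : ZMod (a i)) = m i * cofactor a i := by
  push_cast
  refine sum_eq_single i (fun j _ hji => ?_) (by simp)
  rw [(ZMod.natCast_eq_zero_iff _ _).mpr (dvd_cofactor hji.symm), mul_zero]

theorem isUnit_cofactor (hcop : Pairwise (Nat.Coprime on a)) (i : ι) :
    IsUnit (cofactor a i : ZMod (a i)) :=
  (ZMod.isUnit_iff_coprime _ _).mpr (coprime_cofactor hcop i).symm

theorem sub_one_le_of_sum_mul_cofactor_eq (hcop : Pairwise (Nat.Coprime on a)) (m : ι → ℕ)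
    (hm : ∑ j, (m j : ℤ) * cofactor a j = ∑ j, ((a j : ℤ) - 1) * cofactor a j - ∏ j, (a j : ℤ))
    (i : ι) : (a i : ℤ) - 1 ≤ m i := by
  have hP : ((∏ j, (a j : ℤ) : ℤ) : ZMod (a i)) = 0 := by
    push_cast
    exact prod_eq_zero (mem_univ i) (ZMod.natCast_self _)
  have hmod := congrArg (Int.cast : ℤ → ZMod (a i)) hm
  rw [Int.cast_sub, intCast_sum_mul_cofactor, intCast_sum_mul_cofactor, hP] at hmod
  have hneg : ((m i : ℤ) : ZMod (a i)) = -1 := by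
    refine (isUnit_cofactor hcop i).mul_left_inj.mp (hmod.trans ?_)
    simp
  have hdvd : a i ∣ m i + 1 := by
    rw [← ZMod.natCast_eq_zero_iff]
    push_cast at hneg ⊢
    rw [hneg, neg_add_cancel]
  have := Nat.le_of_dvd (Nat.succ_pos _) hdvd
  omega

theorem exists_sum_mul_cofactor_modEq (ha : ∀ i, 0 < a i) (hcop : Pairwise (Nat.Coprime on a))
    (x : ℤ) : ∃ c : ι → ℕ, (∀ i, c i < a i) ∧
      ∑ i, (c i : ℤ) * cofactor a i ≡ x [ZMOD ∏ i, (a i : ℤ)] := by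
  have : ∀ i, NeZero (a i) := fun i => ⟨(ha i).ne'⟩
  refine ⟨fun i => ((x : ZMod (a i)) * (cofactor a i : ZMod (a i))⁻¹).val,
    fun i => ZMod.val_lt _, Int.modEq_iff_dvd.mpr <| Fintype.prod_dvd_of_coprime
      (hcop.mono fun _ _ h => Nat.isCoprime_iff_coprime.mpr h) fun i => ?_⟩
  rw [← ZMod.intCast_zmod_eq_zero_iff_dvd, Int.cast_sub, intCast_sum_mul_cofactor]
  push_cast
  rw [ZMod.natCast_zmod_val, mul_assoc, ZMod.inv_mul_of_unit _ (isUnit_cofactor hcop i),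
    mul_one, sub_self]

theorem notMem_closure_cofactor (ha : ∀ i, 0 < a i) (hcop : Pairwise (Nat.Coprime on a)) :
    ∑ i, ((a i : ℤ) - 1) * cofactor a i - ∏ i, (a i : ℤ)
      ∉ AddSubmonoid.closure (Set.range fun i => (cofactor a i : ℤ)) := by
  rw [AddSubmonoid.mem_closure_range_iff_of_fintype]
  rintro ⟨m, hm⟩
  simp only [nsmul_eq_mul] at hm
  have hle : ∑ i, ((a i : ℤ) - 1) * cofactor a i ≤ ∑ i, (m i : ℤ) * cofactor a i :=
    sum_le_sum fun i _ => mul_le_mul_of_nonneg_right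
      (sub_one_le_of_sum_mul_cofactor_eq hcop m hm.symm i) (by positivity)
  have hP : 0 < ∏ i, (a i : ℤ) := prod_pos fun i _ => by exact_mod_cast ha i
  linarith

theorem mem_closure_cofactor_of_lt [Nonempty ι] (ha : ∀ i, 0 < a i)
    (hcop : Pairwise (Nat.Coprime on a)) {x : ℤ}
    (hx : ∑ i, ((a i : ℤ) - 1) * cofactor a i - ∏ i, (a i : ℤ) < x) :
    x ∈ AddSubmonoid.closure (Set.range fun i => (cofactor a i : ℤ)) := by
  set S := AddSubmonoid.closure (Set.range fun i => (cofactor a i : ℤ))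
  have hgen : ∀ i, (cofactor a i : ℤ) ∈ S := fun i => AddSubmonoid.subset_closure ⟨i, rfl⟩
  obtain ⟨c, hc, hcx⟩ := exists_sum_mul_cofactor_modEq ha hcop x
  obtain ⟨t, ht⟩ := hcx.dvd
  set y := ∑ i, (c i : ℤ) * cofactor a i
  have hy : y ≤ ∑ i, ((a i : ℤ) - 1) * cofactor a i :=
    sum_le_sum fun i _ => mul_le_mul_of_nonneg_right
      (by have := hc i; omega) (by positivity)
  have hP : 0 < ∏ i, (a i : ℤ) := prod_pos fun i _ => by exact_mod_cast ha i
  have ht : 0 ≤ t := by nlinarith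
  lift t to ℕ using ht
  obtain ⟨i₀⟩ := ‹Nonempty ι›
  have hPi : ∏ j, (a j : ℤ) = a i₀ * cofactor a i₀ := by exact_mod_cast (mul_cofactor a i₀).symm
  have hxy : x = y + (t * a i₀) • (cofactor a i₀ : ℤ) := by
    rw [nsmul_eq_mul]; push_cast; linear_combination ht + (t : ℤ) * hPi
  rw [hxy]
  exact add_mem (sum_mem fun i _ => by simpa using nsmul_mem (hgen i) (c i)) (nsmul_mem (hgen i₀) _)

theorem isGreatest_notMem_closure_cofactor [Nonempty ι] (ha : ∀ i, 0 < a i)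
    (hcop : Pairwise (Nat.Coprime on a)) :
    IsGreatest {x : ℤ | x ∉ AddSubmonoid.closure (Set.range fun i => (cofactor a i : ℤ))}
      (((Fintype.card ι : ℤ) - 1) * ∏ i, (a i : ℤ) - ∑ i, (cofactor a i : ℤ)) := by
  rw [← sum_sub_one_mul_cofactor]
  exact ⟨notMem_closure_cofactor ha hcop, fun x hx => not_lt.mp fun hlt =>
    hx (mem_closure_cofactor_of_lt ha hcop hlt)⟩

end Cofactor

/-- Tripathi's theorem: `(k−1)·Π − Σ` is the greatest integer having no
representation in terms of `(A₁, …, A_k)`. -/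
theorem stmt13 (k : ℕ) (hk : 1 ≤ k)
    (a : Fin k → ℕ) (ha : ∀ i, 0 < a i)
    (hcop : ∀ i j, i ≠ j → Nat.Coprime (a i) (a j)) :
    IsGreatest
      {x : ℤ | numRep (fun i => (∏ j, a j) / a i) x = 0}
      (((k : ℤ) - 1) * ((∏ j, a j : ℕ) : ℤ)
        - ((∑ i, (∏ j, a j) / a i : ℕ) : ℤ)) := by
  have : Nonempty (Fin k) := ⟨⟨0, hk⟩⟩
  have hA : (fun i => (∏ j, a j) / a i) = cofactor a :=
    funext fun i => (cofactor_eq_div (ha i).ne').symm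
  have hset : {x : ℤ | numRep (cofactor a) x = 0}
      = {x : ℤ | x ∉ AddSubmonoid.closure (Set.range fun i => (cofactor a i : ℤ))} :=
    Set.ext fun x => numRep_eq_zero_iff (cofactor_pos ha) x
  rw [hA, hset]
  simpa only [Fintype.card_fin, Nat.cast_prod, Nat.cast_sum] using
    isGreatest_notMem_closure_cofactor ha fun i j => hcop i j
end
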